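/- There exist 37 points p₁, …, p₃₇ in the unit square [0,1]² ⊆ ℝ² such that ‖pᵢ − pⱼ‖ ≥ 0.196 for all i ≠ j. -/

import Mathlib

open Set

noncomputable def gridPoint (N : ℕ) (a b : ℤ) : EuclideanSpace ℝ (Fin 2) :=
  !₂[(a : ℝ) / N, (b : ℝ) / N]

lemma gridPoint_mem_unitSquare {N : ℕ} {a b : ℤ} (ha : 0 ≤ a ∧ a ≤ N) (hb : 0 ≤ b ∧ b ≤ N)
    (t : Fin 2) : gridPoint N a b t ∈ Icc (0 : ℝ) 1 := by
  have hmem : ∀ c : ℤ, 0 ≤ c ∧ c ≤ N → (c : ℝ) / N ∈ Icc (0 : ℝ) 1 := by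
    rintro c ⟨hc0, hcN⟩
    rcases (Nat.cast_nonneg N : (0 : ℝ) ≤ N).eq_or_lt with hN | hN
    · simp [← hN]
    · exact ⟨by positivity, (div_le_one hN).2 (by exact_mod_cast hcN)⟩
  fin_cases t
  · exact hmem a ha
  · exact hmem b hb

lemma norm_gridPoint_sub_sq (N : ℕ) (a b c d : ℤ) :
    ‖gridPoint N a b - gridPoint N c d‖ ^ 2 = (((a - c) ^ 2 + (b - d) ^ 2 : ℤ) : ℝ) / N ^ 2 := by
  rw [EuclideanSpace.norm_sq_eq, Fin.sum_univ_two]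
  simp only [gridPoint, PiLp.sub_apply, Matrix.cons_val_zero, Matrix.cons_val_one,
    Real.norm_eq_abs, sq_abs]
  push_cast
  ring

lemma div_le_norm_gridPoint_sub {N m : ℕ} {a b c d : ℤ}
    (h : (m : ℤ) ^ 2 ≤ (a - c) ^ 2 + (b - d) ^ 2) :
    (m : ℝ) / N ≤ ‖gridPoint N a b - gridPoint N c d‖ := by
  refine le_of_sq_le_sq ?_ (norm_nonneg _)
  rw [norm_gridPoint_sub_sq, div_pow]
  gcongr
  exact_mod_cast h

/-- Coordinates of the 37 points in units of `1 / 10000`: on this grid the bounds and all pairwise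
distance inequalities are decided in exact integer arithmetic. -/
def packX : Fin 37 → ℤ := ![5000, 0, 0, 0, 6661, 0, 10000, 5005, 1699, 1642, 0, 10000, 3141, 1962,
  8316, 4271, 8123, 8034, 6848, 10000, 3395, 8343, 1752, 6234, 0, 8279, 3981, 10000, 1962, 10000,
  4813, 6575, 10000, 6495, 5944, 3487, 3117]

def packY : Fin 37 → ℤ := ![7599, 0, 8036, 5887, 1915, 10000, 3976, 5052, 2943, 6961, 1962, 8038,
  8227, 9882, 2969, 0, 583, 10000, 8259, 10000, 3930, 6988, 5002, 0, 3924, 4980, 10000, 0, 0, 5938,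
  2574, 3875, 1962, 6328, 10000, 6296, 1587]

lemma packX_mem (i : Fin 37) : 0 ≤ packX i ∧ packX i ≤ 10000 := by
  revert i; decide

lemma packY_mem (i : Fin 37) : 0 ≤ packY i ∧ packY i ≤ 10000 := by
  revert i; decide

set_option maxRecDepth 10000 in
lemma sq_1960_le_pack_dist_sq :
    ∀ i j : Fin 37, i ≠ j → 1960 ^ 2 ≤ (packX i - packX j) ^ 2 + (packY i - packY j) ^ 2 := by
  decide

/-- There exist 37 points in the unit square `[0,1]²` with all pairwise
Euclidean distances at least 0.196 (point-spreading form of the improved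
packing of 37 equal disks in a square). -/
theorem packing_37_disks :
    ∃ p : Fin 37 → EuclideanSpace ℝ (Fin 2),
      (∀ i, ∀ t : Fin 2, p i t ∈ Set.Icc (0 : ℝ) 1) ∧
      ∀ i j, i ≠ j → (0.196 : ℝ) ≤ ‖p i - p j‖ := by
  refine ⟨fun i => gridPoint 10000 (packX i) (packY i), fun i =>
    gridPoint_mem_unitSquare (packX_mem i) (packY_mem i), fun i j hij => ?_⟩
  calc (0.196 : ℝ) = ((1960 : ℕ) : ℝ) / (10000 : ℕ) := by norm_num
    _ ≤ _ := div_le_norm_gridPoint_sub (by exact_mod_cast sq_1960_le_pack_dist_sq i j hij)
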